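/- arXiv:2103.12968 — 7 statements merged into one kernel-verified Lean document; each statement's English description precedes it below -/
import Mathlib

section
/- Let μ ∈ ℝ, σ > 0, and let X be distributed according to the real Gaussian measure gaussianReal μ σ². Let φ ∈ (0, 1/2), b ∈ ℝ, and let c ≥ 0 satisfy (2/√π)·∫₀ᶜ exp(−t²) dt = 1 − 2φ. Then P(X < b) ≤ φ if and only if μ − b ≥ √2·σ·c. (This is the scalar form of the paper's Lemma 1: the chance constraint Pr(X < b) ≤ φ is equivalent to the deterministic linear constraint μ − b ≥ √(2σ²)·erf⁻¹(1 − 2φ).) -/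
open MeasureTheory ProbabilityTheory Real Set
open scoped NNReal

/-! The law of `X` has a strictly increasing distribution function that equals `1/2`
at the mean by symmetry, and the substitution `x = μ - √(2v) s` turns its increment over
`[μ - √(2v) c, μ]` into `erf c / 2`. Hence `φ = (1 - erf c) / 2` is exactly `P(X < μ - √(2v) c)`,
and `P(X < b) ≤ φ` becomes `b ≤ μ - √(2v) c` by monotonicity. -/

noncomputable def Real.erf (x : ℝ) : ℝ := 2 / √π * ∫ t in (0 : ℝ)..x, exp (-t ^ 2)

namespace ProbabilityTheory

variable {μ : ℝ} {v : ℝ≥0}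

lemma gaussianReal_real_Iio (hv : v ≠ 0) (y : ℝ) :
    (gaussianReal μ v).real (Iio y) = ∫ x in Iic y, gaussianPDFReal μ v x := by
  rw [measureReal_def, gaussianReal_apply_eq_integral μ hv, setIntegral_congr_set Iio_ae_eq_Iic,
    ENNReal.toReal_ofReal (integral_nonneg (gaussianPDFReal_nonneg μ v))]

lemma gaussianReal_real_Iio_sub_Iio (hv : v ≠ 0) (a b : ℝ) :
    (gaussianReal μ v).real (Iio b) - (gaussianReal μ v).real (Iio a)
      = ∫ x in a..b, gaussianPDFReal μ v x := by
  have hint := integrable_gaussianPDFReal μ v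
  rw [gaussianReal_real_Iio hv, gaussianReal_real_Iio hv,
    intervalIntegral.integral_Iic_sub_Iic hint.integrableOn hint.integrableOn]

lemma strictMono_gaussianReal_real_Iio (hv : v ≠ 0) :
    StrictMono fun y ↦ (gaussianReal μ v).real (Iio y) := by
  intro a b hab
  have hpos := intervalIntegral.intervalIntegral_pos_of_pos
    (integrable_gaussianPDFReal μ v).intervalIntegrable (gaussianPDFReal_pos μ v · hv) hab
  linarith [gaussianReal_real_Iio_sub_Iio (μ := μ) hv a b]

lemma gaussianReal_real_Iio_self (hv : v ≠ 0) : (gaussianReal μ v).real (Iio μ) = 1 / 2 := by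
  have := nullSingletonClass_gaussianReal (μ := μ) hv
  have hreflect : (gaussianReal μ v).real (Ioi μ) = (gaussianReal μ v).real (Iio μ) := by
    have hmap : (gaussianReal μ v).map (2 * μ - ·) = gaussianReal μ v := by
      rw [gaussianReal_map_const_sub, two_mul, add_sub_cancel_right]
    have hpre : (2 * μ - ·) ⁻¹' Iio μ = Ioi μ := by
      rw [preimage_const_sub_Iio, two_mul, add_sub_cancel_right]
    rw [← hpre, ← map_measureReal_apply (by fun_prop) measurableSet_Iio, hmap]
  have hcompl : (gaussianReal μ v).real (Iic μ) + (gaussianReal μ v).real (Ioi μ) = 1 := by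
    rw [← compl_Iic, measureReal_compl measurableSet_Iic, probReal_univ]; ring
  rw [measureReal_congr Iio_ae_eq_Iic] at hreflect ⊢
  linarith

lemma integral_gaussianPDFReal_sub_sqrt_mul (hv : v ≠ 0) (c : ℝ) :
    ∫ x in μ - √(2 * v) * c..μ, gaussianPDFReal μ v x = erf c / 2 := by
  have hs : √(2 * v) ≠ 0 := by positivity
  have hpdf (s : ℝ) :
      gaussianPDFReal μ v (μ - √(2 * v) * s) = (√π * √(2 * v))⁻¹ * exp (-s ^ 2) := by
    have hsq : (μ - √(2 * v) * s - μ) ^ 2 = 2 * v * s ^ 2 := by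
      rw [sub_sub_cancel_left, neg_sq, mul_pow, sq_sqrt (by positivity)]
    rw [gaussianPDFReal, hsq, ← sqrt_mul pi_pos.le, mul_left_comm π]
    field_simp
  have hsubst :=
    intervalIntegral.integral_comp_sub_mul (gaussianPDFReal μ v) (a := 0) (b := c) hs μ
  simp only [hpdf, intervalIntegral.integral_const_mul, mul_zero, sub_zero, smul_eq_mul] at hsubst
  rw [erf]
  field_simp at hsubst ⊢
  exact hsubst.symm

lemma gaussianReal_real_Iio_sub_sqrt_mul (hv : v ≠ 0) (c : ℝ) :
    (gaussianReal μ v).real (Iio (μ - √(2 * v) * c)) = (1 - erf c) / 2 := by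
  have hdiff := gaussianReal_real_Iio_sub_Iio (μ := μ) hv (μ - √(2 * v) * c) μ
  rw [gaussianReal_real_Iio_self hv, integral_gaussianPDFReal_sub_sqrt_mul hv] at hdiff
  linarith

end ProbabilityTheory

theorem stmt0_general {Ω : Type*} [MeasurableSpace Ω] (P : Measure Ω) [IsProbabilityMeasure P]
    (X : Ω → ℝ) (hXm : Measurable X) (μ σ : ℝ) (hσ : 0 < σ)
    (hX : P.map X = gaussianReal μ ⟨σ ^ 2, sq_nonneg σ⟩)
    (φ b c : ℝ)
    (herf : (2 / Real.sqrt π) * ∫ t in (0 : ℝ)..c, Real.exp (-t ^ 2) = 1 - 2 * φ) :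
    P {ω | X ω < b} ≤ ENNReal.ofReal φ ↔ μ - b ≥ Real.sqrt 2 * σ * c := by
  set v : ℝ≥0 := ⟨σ ^ 2, sq_nonneg σ⟩
  have hv : v ≠ 0 := ne_of_apply_ne NNReal.toReal (pow_ne_zero 2 hσ.ne')
  have hsqrt : √(2 * v) = √2 * σ := by
    rw [show (v : ℝ) = σ ^ 2 from rfl, sqrt_mul zero_le_two, sqrt_sq hσ.le]
  have hφ : φ = (gaussianReal μ v).real (Iio (μ - √2 * σ * c)) := by
    rw [← hsqrt, gaussianReal_real_Iio_sub_sqrt_mul hv, erf, herf]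
    ring
  rw [show {ω | X ω < b} = X ⁻¹' Iio b from rfl, ← Measure.map_apply hXm measurableSet_Iio, hX,
    hφ, ← ofReal_measureReal, ENNReal.ofReal_le_ofReal_iff measureReal_nonneg,
    (strictMono_gaussianReal_real_Iio hv).le_iff_le, ge_iff_le, le_sub_comm]

/-- Scalar form of the paper's Lemma 1: for a Gaussian random variable `X` with mean `μ` and
variance `σ²`, and `φ ∈ (0, 1/2)`, the chance constraint `Pr(X < b) ≤ φ` is equivalent to the
deterministic constraint `μ - b ≥ √2 · σ · erf⁻¹(1 - 2φ)`, where `erf⁻¹(1 - 2φ)` is encoded by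
the nonnegative real `c` satisfying `erf c = 1 - 2φ`. -/
theorem stmt0 {Ω : Type*} [MeasurableSpace Ω] (P : Measure Ω) [IsProbabilityMeasure P]
    (X : Ω → ℝ) (hXm : Measurable X) (μ σ : ℝ) (hσ : 0 < σ)
    (hX : P.map X = gaussianReal μ ⟨σ ^ 2, sq_nonneg σ⟩)
    (φ b c : ℝ) (hφ : φ ∈ Ioo (0 : ℝ) (1 / 2)) (hc : 0 ≤ c)
    (herf : (2 / Real.sqrt π) * ∫ t in (0 : ℝ)..c, Real.exp (-t ^ 2) = 1 - 2 * φ) :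
    P {ω | X ω < b} ≤ ENNReal.ofReal φ ↔ μ - b ≥ Real.sqrt 2 * σ * c :=
  stmt0_general P X hXm μ σ hσ hX φ b c herf
end

section
/- Let X₁ and X₂ be independent real random variables on a probability space with laws gaussianReal μ₁ w₁ and gaussianReal μ₂ w₂ respectively, where w₁, w₂ > 0. Let A₁, A₂ ∈ ℝ be not both zero, b ∈ ℝ, φ ∈ (0, 1/2), and let c ≥ 0 satisfy (2/√π)·∫₀ᶜ exp(−t²) dt = 1 − 2φ. Then P(A₁X₁ + A₂X₂ < b) ≤ φ if and only if A₁μ₁ + A₂μ₂ − b ≥ √(2·(A₁²w₁ + A₂²w₂))·c. (This is the paper's Lemma 1 for a linear functional AᵀX of a Gaussian vector X with mean (μ₁, μ₂) and diagonal covariance diag(w₁, w₂): Pr(AᵀX < b) ≤ φ iff Aᵀμ − b ≥ √(2AᵀΣA)·erf⁻¹(1 − 2φ).) -/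
/-!
`Y = A₁X₁ + A₂X₂` is Gaussian with mean `m = A₁μ₁ + A₂μ₂` and variance `V = A₁²w₁ + A₂²w₂ > 0`.
Writing `Y = m - √(2V)·T` with `T ~ N(0, 1/2)`, whose density is `exp (-t²) / √π`, gives
`P(Y < m - √(2V)·c) = P(T > c) = (1 - erf c) / 2 = φ`. As `Y` has an everywhere positive density,
`t ↦ P(Y < t)` is strictly increasing, so `P(Y < b) ≤ φ` iff `b ≤ m - √(2V)·c`.
-/

open MeasureTheory ProbabilityTheory Real Set
open scoped NNReal

lemma gaussianPDFReal_zero_inv_two (t : ℝ) :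
    gaussianPDFReal 0 2⁻¹ t = (√π)⁻¹ * exp (-t ^ 2) := by
  simp [gaussianPDFReal]
  field_simp

lemma gaussianReal_zero_inv_two_apply_Ioi (c : ℝ) :
    gaussianReal 0 2⁻¹ (Ioi c) = ENNReal.ofReal ((√π)⁻¹ * ∫ t in Ioi c, exp (-t ^ 2)) := by
  rw [gaussianReal_apply_eq_integral _ (by norm_num), ← integral_const_mul]
  simp_rw [gaussianPDFReal_zero_inv_two]

lemma map_gaussianReal_zero_inv_two (m : ℝ) (v : ℝ≥0) :
    (gaussianReal 0 2⁻¹).map (fun t ↦ m - √(2 * v) * t) = gaussianReal m v := by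
  have hcomp : (fun t ↦ m - √(2 * v) * t) = (m + ·) ∘ (-√(2 * v) * ·) := by ext; simp; ring
  rw [hcomp, ← Measure.map_map (by fun_prop) (by fun_prop), gaussianReal_map_const_mul,
    gaussianReal_map_const_add, mul_zero, zero_add]
  congr
  ext
  push_cast
  rw [neg_sq, Real.sq_sqrt (by positivity)]
  ring

lemma integral_Ioi_exp_neg_sq (c : ℝ) :
    ∫ t in Ioi c, exp (-t ^ 2) = √π / 2 - ∫ t in (0 : ℝ)..c, exp (-t ^ 2) := by
  have hint : Integrable (fun t : ℝ ↦ exp (-t ^ 2)) := by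
    simpa using integrable_exp_neg_mul_sq one_pos
  have hhalf : ∫ t in Ioi 0, exp (-t ^ 2) = √π / 2 := by
    simpa using integral_gaussian_Ioi 1
  rw [← intervalIntegral.integral_Ioi_sub_Ioi' hint.integrableOn hint.integrableOn, hhalf]
  ring

lemma gaussianReal_apply_Iio_sub_sqrt_mul (m : ℝ) {v : ℝ≥0} (hv : v ≠ 0) (c : ℝ) :
    gaussianReal m v (Iio (m - √(2 * v) * c))
      = ENNReal.ofReal ((1 - 2 / √π * ∫ t in (0 : ℝ)..c, exp (-t ^ 2)) / 2) := by
  have hσ : 0 < √(2 * v) := by positivity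
  have hpre : (fun t ↦ m - √(2 * v) * t) ⁻¹' Iio (m - √(2 * v) * c) = Ioi c := by
    ext t
    simp only [mem_preimage, mem_Iio, mem_Ioi, sub_lt_sub_iff_left, mul_lt_mul_iff_right₀ hσ]
  rw [← map_gaussianReal_zero_inv_two, Measure.map_apply (by fun_prop) measurableSet_Iio, hpre,
    gaussianReal_zero_inv_two_apply_Ioi, integral_Ioi_exp_neg_sq]
  congr 1
  field_simp

lemma measure_Iio_le_measure_Iio_iff {μ : Measure ℝ} [IsFiniteMeasure μ] (h : volume ≪ μ)
    {a b : ℝ} : μ (Iio a) ≤ μ (Iio b) ↔ a ≤ b := by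
  refine ⟨fun hle ↦ ?_, fun hab ↦ measure_mono (Iio_subset_Iio hab)⟩
  by_contra! hba
  have hpos : μ (Ico b a) ≠ 0 := fun h0 ↦ by
    have := h h0
    rw [Real.volume_Ico, ENNReal.ofReal_eq_zero] at this
    linarith
  have hsplit : μ (Iio a) = μ (Iio b) + μ (Ico b a) := by
    rw [← measure_union ((Iio_disjoint_Ici le_rfl).mono_right Ico_subset_Ici_self)
      measurableSet_Ico, Iio_union_Ico_eq_Iio hba.le]
  exact (ENNReal.lt_add_right (measure_ne_top μ _) hpos).not_ge (hsplit ▸ hle)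

lemma gaussianReal_const_mul_add_const_mul_of_indepFun {Ω : Type*} [MeasurableSpace Ω]
    {P : Measure Ω} {X₁ X₂ : Ω → ℝ} (hX₁m : Measurable X₁) (hX₂m : Measurable X₂)
    (hindep : IndepFun X₁ X₂ P) {μ₁ μ₂ : ℝ} {w₁ w₂ : ℝ≥0} (hX₁ : P.map X₁ = gaussianReal μ₁ w₁)
    (hX₂ : P.map X₂ = gaussianReal μ₂ w₂) (A₁ A₂ : ℝ) :
    P.map (fun ω ↦ A₁ * X₁ ω + A₂ * X₂ ω) = gaussianReal (A₁ * μ₁ + A₂ * μ₂)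
      (⟨A₁ ^ 2, sq_nonneg _⟩ * w₁ + ⟨A₂ ^ 2, sq_nonneg _⟩ * w₂) :=
  gaussianReal_add_gaussianReal_of_indepFun
    (hindep.comp (measurable_const_mul A₁) (measurable_const_mul A₂))
    (gaussianReal_const_mul ⟨hX₁m.aemeasurable, hX₁⟩ A₁).map_eq
    (gaussianReal_const_mul ⟨hX₂m.aemeasurable, hX₂⟩ A₂).map_eq

theorem stmt1_general {Ω : Type*} [MeasurableSpace Ω] (P : Measure Ω)
    (X₁ X₂ : Ω → ℝ) (hX₁m : Measurable X₁) (hX₂m : Measurable X₂)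
    (hindep : IndepFun X₁ X₂ P)
    (μ₁ μ₂ : ℝ) (w₁ w₂ : ℝ≥0) (hw₁ : 0 < w₁) (hw₂ : 0 < w₂)
    (hX₁ : P.map X₁ = gaussianReal μ₁ w₁) (hX₂ : P.map X₂ = gaussianReal μ₂ w₂)
    (A₁ A₂ : ℝ) (hA : ¬(A₁ = 0 ∧ A₂ = 0)) (b φ c : ℝ)
    (herf : (2 / Real.sqrt π) * ∫ t in (0 : ℝ)..c, Real.exp (-t ^ 2) = 1 - 2 * φ) :
    P {ω | A₁ * X₁ ω + A₂ * X₂ ω < b} ≤ ENNReal.ofReal φ ↔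
      A₁ * μ₁ + A₂ * μ₂ - b ≥ Real.sqrt (2 * (A₁ ^ 2 * w₁ + A₂ ^ 2 * w₂)) * c := by
  set V : ℝ≥0 := ⟨A₁ ^ 2, sq_nonneg _⟩ * w₁ + ⟨A₂ ^ 2, sq_nonneg _⟩ * w₂
  have hVcoe : (V : ℝ) = A₁ ^ 2 * w₁ + A₂ ^ 2 * w₂ := rfl
  have hV : V ≠ 0 := by
    rw [← NNReal.coe_ne_zero, hVcoe]
    rcases not_and_or.mp hA with hA₁ | hA₂ <;> positivity
  have hevent : P {ω | A₁ * X₁ ω + A₂ * X₂ ω < b}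
      = gaussianReal (A₁ * μ₁ + A₂ * μ₂) V (Iio b) := by
    rw [← gaussianReal_const_mul_add_const_mul_of_indepFun hX₁m hX₂m hindep hX₁ hX₂,
      Measure.map_apply (by fun_prop) measurableSet_Iio]
    rfl
  have hφ : ENNReal.ofReal φ
      = gaussianReal (A₁ * μ₁ + A₂ * μ₂) V (Iio (A₁ * μ₁ + A₂ * μ₂ - √(2 * V) * c)) := by
    rw [gaussianReal_apply_Iio_sub_sqrt_mul _ hV, herf]
    ring_nf
  rw [hevent, hφ, measure_Iio_le_measure_Iio_iff (gaussianReal_absolutelyContinuous' _ hV),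
    hVcoe, ge_iff_le, le_sub_comm]

/-- The paper's Lemma 1 for a linear functional `AᵀX` of a Gaussian vector `X` with mean
`(μ₁, μ₂)` and diagonal covariance `diag(w₁, w₂)`: for `φ ∈ (0, 1/2)`,
`Pr(AᵀX < b) ≤ φ` iff `Aᵀμ - b ≥ √(2 AᵀΣA) · erf⁻¹(1 - 2φ)`, where `erf⁻¹(1 - 2φ)` is encoded
by the nonnegative real `c` with `erf c = 1 - 2φ`. -/
theorem stmt1 {Ω : Type*} [MeasurableSpace Ω] (P : Measure Ω) [IsProbabilityMeasure P]
    (X₁ X₂ : Ω → ℝ) (hX₁m : Measurable X₁) (hX₂m : Measurable X₂)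
    (hindep : IndepFun X₁ X₂ P)
    (μ₁ μ₂ : ℝ) (w₁ w₂ : ℝ≥0) (hw₁ : 0 < w₁) (hw₂ : 0 < w₂)
    (hX₁ : P.map X₁ = gaussianReal μ₁ w₁) (hX₂ : P.map X₂ = gaussianReal μ₂ w₂)
    (A₁ A₂ : ℝ) (hA : ¬(A₁ = 0 ∧ A₂ = 0)) (b φ c : ℝ)
    (hφ : φ ∈ Ioo (0 : ℝ) (1 / 2)) (hc : 0 ≤ c)
    (herf : (2 / Real.sqrt π) * ∫ t in (0 : ℝ)..c, Real.exp (-t ^ 2) = 1 - 2 * φ) :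
    P {ω | A₁ * X₁ ω + A₂ * X₂ ω < b} ≤ ENNReal.ofReal φ ↔
      A₁ * μ₁ + A₂ * μ₂ - b ≥ Real.sqrt (2 * (A₁ ^ 2 * w₁ + A₂ ^ 2 * w₂)) * c :=
  stmt1_general P X₁ X₂ hX₁m hX₂m hindep μ₁ μ₂ w₁ w₂ hw₁ hw₂ hX₁ hX₂ A₁ A₂ hA b φ c herf
end

section
/- Let V be a real inner product space, p_i, p_j ∈ V, r > 0, d = ‖p_j − p_i‖ with d > r, and let v ∈ V be nonzero. Then there exists λ ≥ 0 with ‖(p_i + λ·v) − p_j‖ ≤ r if and only if the (unoriented) angle between v and p_j − p_i is at most arcsin(r/d). (The collision cone of relative velocities is exactly the cone of directions within angle α of p_ij, where sin α = r/‖p_ij‖.) -/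
/-!
With `w = p_j - p_i` and `θ = angle v w`, the squared distance from `p_i + l • v` to `p_j` splits as
`(l‖v‖ - ‖w‖ cos θ)² + (‖w‖ sin θ)²`. Since `‖w‖ > r`, a point of the ray lies in the ball iff the
ray heads towards `p_j` (`cos θ ≥ 0`, so the first term can be killed with `l ≥ 0`) and the
perpendicular distance `‖w‖ sin θ` is at most `r`; for `θ ∈ [0, π]` this is `θ ≤ arcsin (r / ‖w‖)`.
-/

open Real

lemma exists_nonneg_sq_sub_add_sq_le_iff {s b c R : ℝ} (hs : 0 < s) (hR : R < b ^ 2 + c ^ 2) :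
    (∃ l : ℝ, 0 ≤ l ∧ (l * s - b) ^ 2 + c ^ 2 ≤ R) ↔ 0 ≤ b ∧ c ^ 2 ≤ R := by
  constructor
  · rintro ⟨l, hl, hle⟩
    refine ⟨?_, by nlinarith⟩
    by_contra! hb
    nlinarith [mul_nonneg hl hs.le]
  · rintro ⟨hb, hc⟩
    exact ⟨b / s, by positivity, by rwa [div_mul_cancel₀ b hs.ne', sub_self, sq, zero_mul, zero_add]⟩

lemma le_arcsin_iff_cos_nonneg_and_sin_le {θ y : ℝ} (hθ₀ : 0 ≤ θ) (hθπ : θ ≤ π) :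
    θ ≤ arcsin y ↔ 0 ≤ cos θ ∧ sin θ ≤ y := by
  constructor
  · intro h
    have hθ : θ ≤ π / 2 := h.trans (arcsin_le_pi_div_two y)
    exact ⟨cos_nonneg_of_neg_pi_div_two_le_of_le (by linarith [pi_pos]) hθ,
      (le_arcsin_iff_sin_le' ⟨by linarith [pi_pos], hθ⟩).1 h⟩
  · rintro ⟨hcos, hsin⟩
    have hθ : θ ≤ π / 2 := by
      by_contra! h
      exact (cos_neg_of_pi_div_two_lt_of_lt h (by linarith [pi_pos])).not_ge hcos
    exact (le_arcsin_iff_sin_le' ⟨by linarith [pi_pos], hθ⟩).2 hsin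

namespace InnerProductGeometry

variable {V : Type*} [NormedAddCommGroup V] [InnerProductSpace ℝ V]

lemma norm_smul_sub_sq_eq (l : ℝ) (v w : V) :
    ‖l • v - w‖ ^ 2 =
      (l * ‖v‖ - ‖w‖ * cos (angle v w)) ^ 2 + (‖w‖ * sin (angle v w)) ^ 2 := by
  rw [norm_sub_sq_real, norm_smul, real_inner_smul_left, ← cos_angle_mul_norm_mul_norm,
    Real.norm_eq_abs, mul_pow, sq_abs]
  linear_combination -‖w‖ ^ 2 * sin_sq_add_cos_sq (angle v w)

end InnerProductGeometry

open InnerProductGeometry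

/-- The collision cone is the cone of directions within angle `α = arcsin(r/d)` of `p_j - p_i`:
the ray from `p_i` with direction `v` meets the closed ball of radius `r` around `p_j` iff the
unoriented angle between `v` and `p_j - p_i` is at most `arcsin (r / d)`, where
`d = ‖p_j - p_i‖ > r`. -/
theorem stmt7 {V : Type*} [NormedAddCommGroup V] [InnerProductSpace ℝ V]
    (p_i p_j : V) (r : ℝ) (hr : 0 < r) (d : ℝ) (hd : d = ‖p_j - p_i‖) (hdr : r < d)
    (v : V) (hv : v ≠ 0) :
    (∃ l : ℝ, 0 ≤ l ∧ ‖(p_i + l • v) - p_j‖ ≤ r) ↔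
      InnerProductGeometry.angle v (p_j - p_i) ≤ Real.arcsin (r / d) := by
  set θ := angle v (p_j - p_i)
  have hd₀ : 0 < d := hr.trans hdr
  have hray (l : ℝ) : ‖(p_i + l • v) - p_j‖ ^ 2 = (l * ‖v‖ - d * cos θ) ^ 2 + (d * sin θ) ^ 2 := by
    rw [hd, ← norm_smul_sub_sq_eq, sub_sub_eq_add_sub, add_comm]
  have hfar : r ^ 2 < (d * cos θ) ^ 2 + (d * sin θ) ^ 2 := by
    have hpyth : (d * cos θ) ^ 2 + (d * sin θ) ^ 2 = d ^ 2 := by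
      linear_combination d ^ 2 * cos_sq_add_sin_sq θ
    rw [hpyth]
    exact pow_lt_pow_left₀ hdr hr.le two_ne_zero
  calc (∃ l : ℝ, 0 ≤ l ∧ ‖(p_i + l • v) - p_j‖ ≤ r)
      ↔ ∃ l : ℝ, 0 ≤ l ∧ (l * ‖v‖ - d * cos θ) ^ 2 + (d * sin θ) ^ 2 ≤ r ^ 2 := by
        simp only [← hray, sq_le_sq₀ (norm_nonneg _) hr.le]
    _ ↔ 0 ≤ d * cos θ ∧ (d * sin θ) ^ 2 ≤ r ^ 2 :=
        exists_nonneg_sq_sub_add_sq_le_iff (norm_pos_iff.2 hv) hfar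
    _ ↔ 0 ≤ cos θ ∧ sin θ ≤ r / d := by
        rw [sq_le_sq₀ (mul_nonneg hd₀.le (sin_nonneg_of_nonneg_of_le_pi (angle_nonneg _ _)
          (angle_le_pi _ _))) hr.le, mul_nonneg_iff_of_pos_left hd₀, le_div_iff₀ hd₀, mul_comm]
    _ ↔ θ ≤ arcsin (r / d) :=
        (le_arcsin_iff_cos_nonneg_and_sin_le (angle_nonneg _ _) (angle_le_pi _ _)).symm
end

section
/- Let V be a real inner product space, p_i, p_j ∈ V, r > 0, d = ‖p_j − p_i‖ with d > r, and let v ∈ V be nonzero. Set p = p_j − p_i. Then there exists λ ≥ 0 with ‖(p_i + λ·v) − p_j‖ ≤ r if and only if ⟪v, p⟫ ≥ 0 and ⟪v, p⟫² ≥ ‖v‖²·(d² − r²). (Algebraic characterization of membership in the collision cone C_ij.) -/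
open scoped RealInnerProductSpace

theorem exists_nonneg_quadratic_nonpos_iff {a b c : ℝ} (ha : 0 < a) (hc : 0 < c) :
    (∃ l : ℝ, 0 ≤ l ∧ a * l ^ 2 - 2 * b * l + c ≤ 0) ↔ 0 ≤ b ∧ a * c ≤ b ^ 2 := by
  constructor
  · rintro ⟨l, hl, hq⟩
    refine ⟨by nlinarith, ?_⟩
    -- `a * (a l² - 2 b l + c) = (a l - b)² + (a c - b²)`
    nlinarith [sq_nonneg (a * l - b)]
  · rintro ⟨hb, hdisc⟩
    refine ⟨b / a, div_nonneg hb ha.le, ?_⟩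
    have hvertex : a * (b / a) ^ 2 - 2 * b * (b / a) + c = c - b ^ 2 / a := by
      field_simp
      ring
    rw [hvertex, sub_nonpos, le_div_iff₀ ha]
    linarith

section InnerProductSpace

variable {V : Type*} [NormedAddCommGroup V] [InnerProductSpace ℝ V]

theorem norm_smul_sub_sq (l : ℝ) (v p : V) :
    ‖l • v - p‖ ^ 2 = ‖v‖ ^ 2 * l ^ 2 - 2 * ⟪v, p⟫ * l + ‖p‖ ^ 2 := by
  rw [norm_sub_sq_real, inner_smul_left, norm_smul, mul_pow, Real.norm_eq_abs, sq_abs,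
    RCLike.conj_to_real]
  ring

theorem exists_nonneg_norm_smul_sub_le_iff {v p : V} {r : ℝ} (hr : 0 ≤ r) (hpr : r < ‖p‖)
    (hv : v ≠ 0) :
    (∃ l : ℝ, 0 ≤ l ∧ ‖l • v - p‖ ≤ r) ↔
      0 ≤ ⟪v, p⟫ ∧ ‖v‖ ^ 2 * (‖p‖ ^ 2 - r ^ 2) ≤ ⟪v, p⟫ ^ 2 := by
  have hle_iff (l : ℝ) :
      ‖l • v - p‖ ≤ r ↔ ‖v‖ ^ 2 * l ^ 2 - 2 * ⟪v, p⟫ * l + (‖p‖ ^ 2 - r ^ 2) ≤ 0 := by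
    rw [← pow_le_pow_iff_left₀ (norm_nonneg _) hr two_ne_zero, norm_smul_sub_sq]
    constructor <;> intro h <;> linarith
  simp only [hle_iff]
  exact exists_nonneg_quadratic_nonpos_iff (by positivity)
    (sub_pos.mpr (pow_lt_pow_left₀ hpr hr two_ne_zero))

end InnerProductSpace

/-- Algebraic characterization of membership in the collision cone: the ray from `p_i` with
direction `v` meets the closed ball of radius `r` around `p_j` iff `⟪v, p⟫ ≥ 0` and
`⟪v, p⟫² ≥ ‖v‖² (d² - r²)`, where `p = p_j - p_i` and `d = ‖p‖ > r`. -/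
theorem stmt9 {V : Type*} [NormedAddCommGroup V] [InnerProductSpace ℝ V]
    (p_i p_j : V) (r : ℝ) (hr : 0 < r) (d : ℝ) (hd : d = ‖p_j - p_i‖) (hdr : r < d)
    (v : V) (hv : v ≠ 0) (p : V) (hp : p = p_j - p_i) :
    (∃ l : ℝ, 0 ≤ l ∧ ‖(p_i + l • v) - p_j‖ ≤ r) ↔
      (inner ℝ v p : ℝ) ≥ 0 ∧ (inner ℝ v p : ℝ) ^ 2 ≥ ‖v‖ ^ 2 * (d ^ 2 - r ^ 2) := by
  subst hd hp
  have hshift (l : ℝ) : (p_i + l • v) - p_j = l • v - (p_j - p_i) := by abel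
  simp only [hshift, ge_iff_le]
  exact exists_nonneg_norm_smul_sub_le_iff hr.le hdr hv
end

section
/- Work in the Euclidean plane E = EuclideanSpace ℝ (Fin 2) with its standard orientation o. Let p_i, p_j ∈ E, r > 0, d = ‖p_j − p_i‖ with d > r, α = arcsin(r/d), and let T = o.rotation α applied to p_j − p_i (and likewise for rotation by −α). Then the infimum of ‖(p_i + λ·T) − p_j‖ over λ ≥ 0 equals r, i.e., the ray from p_i in the direction of the rotated vector T is tangent to the closed ball of radius r around p_j. (The two boundary rays of the collision cone, obtained by rotating p_ij by ±α with sin α = r/‖p_ij‖, are exactly the tangent lines to the inflated obstacle.) -/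
/-!
Write `v = p_j - p_i` and `T = R_θ v` with `θ = ±α`. Since `⟪R_θ v, v⟫ = cos θ ‖v‖²`, completing the
square gives `‖l • T - v‖² = ‖v‖² ((l - cos θ)² + sin² θ)`. As `cos θ ≥ 0`, the minimum over `l ≥ 0`
is attained at `l = cos θ` and equals `‖v‖ |sin θ| = d · (r / d) = r`.
-/

open Real Set

noncomputable section

instance : Fact (Module.finrank ℝ (EuclideanSpace ℝ (Fin 2)) = 2) :=
  ⟨finrank_euclideanSpace_fin⟩

/-- The standard orientation of the Euclidean plane. -/
def stdOrientation : Orientation ℝ (EuclideanSpace ℝ (Fin 2)) (Fin 2) :=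
  (EuclideanSpace.basisFun (Fin 2) ℝ).toBasis.orientation

namespace Orientation

variable {V : Type*} [NormedAddCommGroup V] [InnerProductSpace ℝ V] [Fact (Module.finrank ℝ V = 2)]
  (o : Orientation ℝ V (Fin 2))

theorem inner_rotation_self (θ : Real.Angle) (x : V) :
    inner ℝ (o.rotation θ x) x = Real.Angle.cos θ * ‖x‖ ^ 2 := by
  rw [o.rotation_apply, inner_add_left, real_inner_smul_left, real_inner_smul_left,
    o.inner_rightAngleRotation_self, real_inner_self_eq_norm_sq, mul_zero, add_zero]

theorem norm_smul_rotation_sub_self_sq (θ : Real.Angle) (x : V) (l : ℝ) :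
    ‖l • o.rotation θ x - x‖ ^ 2 =
      ‖x‖ ^ 2 * ((l - Real.Angle.cos θ) ^ 2 + Real.Angle.sin θ ^ 2) := by
  rw [norm_sub_sq_real, norm_smul, LinearIsometryEquiv.norm_map, real_inner_smul_left,
    o.inner_rotation_self, Real.norm_eq_abs]
  linear_combination ‖x‖ ^ 2 * sq_abs l + ‖x‖ ^ 2 * (Real.Angle.cos_sq_add_sin_sq θ).symm

theorem isLeast_norm_smul_rotation_sub_self {θ : Real.Angle} (hθ : 0 ≤ Real.Angle.cos θ) (x : V) :
    IsLeast ((fun l : ℝ => ‖l • o.rotation θ x - x‖) '' Ici 0) (‖x‖ * |Real.Angle.sin θ|) := by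
  have hnorm : ∀ l, ‖l • o.rotation θ x - x‖ =
      √(‖x‖ ^ 2 * ((l - Real.Angle.cos θ) ^ 2 + Real.Angle.sin θ ^ 2)) := fun l => by
    rw [← o.norm_smul_rotation_sub_self_sq, Real.sqrt_sq (norm_nonneg _)]
  have hmin : √(‖x‖ ^ 2 * Real.Angle.sin θ ^ 2) = ‖x‖ * |Real.Angle.sin θ| := by
    rw [Real.sqrt_mul (sq_nonneg _), Real.sqrt_sq (norm_nonneg _), Real.sqrt_sq_eq_abs]
  refine ⟨⟨Real.Angle.cos θ, hθ, by simp only [hnorm, sub_self, zero_pow two_ne_zero, zero_add, hmin]⟩, ?_⟩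
  rintro _ ⟨l, -, rfl⟩
  dsimp only
  rw [hnorm, ← hmin]
  gcongr
  exact le_add_of_nonneg_left (sq_nonneg _)

end Orientation

/-- The two boundary rays of the collision cone, obtained by rotating `p_j - p_i` by `±α` with
`α = arcsin (r/d)`, are tangent to the inflated obstacle: the infimum of the distance from the
ray from `p_i` in the rotated direction to the center `p_j` equals `r`. -/
theorem stmt10 (p_i p_j : EuclideanSpace ℝ (Fin 2)) (r : ℝ) (hr : 0 < r)
    (d : ℝ) (hd : d = ‖p_j - p_i‖) (hdr : r < d) (α : ℝ) (hα : α = Real.arcsin (r / d))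
    (T : EuclideanSpace ℝ (Fin 2))
    (hT : T = stdOrientation.rotation (α : Real.Angle) (p_j - p_i) ∨
      T = stdOrientation.rotation ((-α : ℝ) : Real.Angle) (p_j - p_i)) :
    sInf ((fun l : ℝ => ‖(p_i + l • T) - p_j‖) '' Ici (0 : ℝ)) = r := by
  have hd0 : 0 < d := hr.trans hdr
  have hsinα : Real.sin α = r / d := by
    rw [hα, Real.sin_arcsin (by linarith [div_pos hr hd0]) ((div_le_one hd0).2 hdr.le)]
  obtain ⟨θ, rfl, hcos, hsin⟩ : ∃ θ : Real.Angle,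
      T = stdOrientation.rotation θ (p_j - p_i) ∧ 0 ≤ Real.Angle.cos θ ∧
        |Real.Angle.sin θ| = r / d := by
    have hcosα : 0 ≤ Real.cos α := hα ▸ Real.cos_arcsin_nonneg _
    have habs : |r / d| = r / d := abs_of_pos (div_pos hr hd0)
    rcases hT with rfl | rfl
    · exact ⟨α, rfl, by rwa [Real.Angle.cos_coe], by rw [Real.Angle.sin_coe, hsinα, habs]⟩
    · exact ⟨(-α : ℝ), rfl, by rwa [Real.Angle.cos_coe, Real.cos_neg],
        by rw [Real.Angle.sin_coe, Real.sin_neg, abs_neg, hsinα, habs]⟩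
  have hray : (fun l : ℝ => ‖(p_i + l • stdOrientation.rotation θ (p_j - p_i)) - p_j‖) =
      fun l : ℝ => ‖l • stdOrientation.rotation θ (p_j - p_i) - (p_j - p_i)‖ := by
    funext l
    congr 1
    abel
  rw [hray, (stdOrientation.isLeast_norm_smul_rotation_sub_self hcos _).csInf_eq, hsin, ← hd]
  field_simp

end
end

section
/- Work in the Euclidean plane E = EuclideanSpace ℝ (Fin 2) with its standard orientation o. Let p ∈ E be nonzero, 0 < r < ‖p‖, α = arcsin(r/‖p‖), and define the outer normals N₁ = o.rotation (−(α + π/2)) p and N₂ = o.rotation (α + π/2) p. Then for every nonzero v ∈ E: (⟪v, N₁⟫ ≤ 0 and ⟪v, N₂⟫ ≤ 0) if and only if the unoriented angle between v and p is at most α. Equivalently, v lies outside the collision cone (angle strictly greater than α) if and only if ⟪v, N₁⟫ > 0 or ⟪v, N₂⟫ > 0. -/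
open Real

noncomputable section

/-! For `v, p ≠ 0` at oriented angle `t` from `v` to `p`, the pairing of `v` with `p` rotated by
`∓(α + π/2)` is `‖v‖‖p‖ cos (t ∓ (α + π/2)) = ± ‖v‖‖p‖ sin (t ∓ α)`, and `∠ v p = |t|`. So the two
normal conditions say that `sin (t - α) ≤ 0 ≤ sin (t + α)`, which for `t ∈ (-π, π]` and
`0 < α ≤ π/2` pins `t` to `[-α, α]`. -/

theorem Real.sin_sub_nonpos_and_sin_add_nonneg_iff_abs_le {α t : ℝ} (hα₀ : 0 < α)
    (hα : α ≤ π / 2) (ht₀ : -π < t) (ht : t ≤ π) :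
    (sin (t - α) ≤ 0 ∧ 0 ≤ sin (t + α)) ↔ |t| ≤ α := by
  rw [abs_le]
  constructor
  · rintro ⟨h_sub, h_add⟩
    by_contra! h_out
    rcases lt_or_ge t (-α) with h_lt | h_ge
    · have : 0 < sin (-(t + α)) := sin_pos_of_pos_of_lt_pi (by linarith) (by linarith)
      rw [sin_neg] at this
      linarith
    · have : 0 < sin (t - α) := sin_pos_of_pos_of_lt_pi (by linarith [h_out h_ge]) (by linarith)
      linarith
  · rintro ⟨h_lower, h_upper⟩
    exact ⟨sin_nonpos_of_nonpos_of_neg_pi_le (by linarith) (by linarith),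
      sin_nonneg_of_nonneg_of_le_pi (by linarith) (by linarith)⟩

namespace Orientation

variable {V : Type*} [NormedAddCommGroup V] [InnerProductSpace ℝ V]
  [Fact (Module.finrank ℝ V = 2)] (o : Orientation ℝ V (Fin 2)) {v p : V}

theorem inner_rotation_eq_cos_oangle_toReal_add (hv : v ≠ 0) (hp : p ≠ 0) (θ : ℝ) :
    inner ℝ v (o.rotation θ p) = ‖v‖ * ‖p‖ * cos ((o.oangle v p).toReal + θ) := by
  rw [o.inner_eq_norm_mul_norm_mul_cos_oangle, LinearIsometryEquiv.norm_map,
    o.oangle_rotation_right hv hp, ← Real.Angle.cos_coe, Real.Angle.coe_add,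
    Real.Angle.coe_toReal]

theorem inner_rotation_neg_add_pi_div_two (hv : v ≠ 0) (hp : p ≠ 0) (α : ℝ) :
    inner ℝ v (o.rotation ((-(α + π / 2) : ℝ) : Real.Angle) p) =
      ‖v‖ * ‖p‖ * sin ((o.oangle v p).toReal - α) := by
  rw [o.inner_rotation_eq_cos_oangle_toReal_add hv hp, ← cos_sub_pi_div_two]
  ring_nf

theorem inner_rotation_add_pi_div_two (hv : v ≠ 0) (hp : p ≠ 0) (α : ℝ) :
    inner ℝ v (o.rotation ((α + π / 2 : ℝ) : Real.Angle) p) =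
      -(‖v‖ * ‖p‖ * sin ((o.oangle v p).toReal + α)) := by
  rw [o.inner_rotation_eq_cos_oangle_toReal_add hv hp, ← mul_neg, ← cos_add_pi_div_two]
  ring_nf

theorem inner_rotation_outer_normals_nonpos_iff_angle_le (hv : v ≠ 0) (hp : p ≠ 0) {α : ℝ}
    (hα₀ : 0 < α) (hα : α ≤ π / 2) :
    (inner ℝ v (o.rotation ((-(α + π / 2) : ℝ) : Real.Angle) p) ≤ 0 ∧
        inner ℝ v (o.rotation ((α + π / 2 : ℝ) : Real.Angle) p) ≤ 0) ↔
      InnerProductGeometry.angle v p ≤ α := by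
  have hvp : 0 < ‖v‖ * ‖p‖ := mul_pos (norm_pos_iff.mpr hv) (norm_pos_iff.mpr hp)
  rw [o.inner_rotation_neg_add_pi_div_two hv hp, o.inner_rotation_add_pi_div_two hv hp,
    o.angle_eq_abs_oangle_toReal hv hp, neg_nonpos, ← neg_nonneg, ← mul_neg,
    mul_nonneg_iff_of_pos_left hvp, mul_nonneg_iff_of_pos_left hvp, neg_nonneg]
  exact sin_sub_nonpos_and_sin_add_nonneg_iff_abs_le hα₀ hα
    (Real.Angle.neg_pi_lt_toReal _) (Real.Angle.toReal_le_pi _)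

end Orientation

theorem stmt11_general (p : EuclideanSpace ℝ (Fin 2)) (r : ℝ) (hr : 0 < r)
    (hrp : r < ‖p‖) (α : ℝ) (hα : α = Real.arcsin (r / ‖p‖))
    (N₁ N₂ : EuclideanSpace ℝ (Fin 2))
    (hN₁ : N₁ = stdOrientation.rotation ((-(α + π / 2) : ℝ) : Real.Angle) p)
    (hN₂ : N₂ = stdOrientation.rotation ((α + π / 2 : ℝ) : Real.Angle) p)
    (v : EuclideanSpace ℝ (Fin 2)) (hv : v ≠ 0) :
    ((inner ℝ v N₁ : ℝ) ≤ 0 ∧ (inner ℝ v N₂ : ℝ) ≤ 0) ↔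
      InnerProductGeometry.angle v p ≤ α := by
  have hp₀ : 0 < ‖p‖ := hr.trans hrp
  have hα₀ : 0 < α := hα ▸ arcsin_pos.mpr (div_pos hr hp₀)
  subst hN₁ hN₂
  exact stdOrientation.inner_rotation_outer_normals_nonpos_iff_angle_le hv
    (norm_pos_iff.mp hp₀) hα₀ (hα ▸ arcsin_le_pi_div_two _)

/-- With outer normals `N₁ = rotation (-(α + π/2)) p` and `N₂ = rotation (α + π/2) p` of the
collision cone with axis `p` and half-opening angle `α = arcsin (r/‖p‖)`, a nonzero `v` satisfies
`⟪v, N₁⟫ ≤ 0 ∧ ⟪v, N₂⟫ ≤ 0` iff the unoriented angle between `v` and `p` is at most `α`. -/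
theorem stmt11 (p : EuclideanSpace ℝ (Fin 2)) (hp : p ≠ 0) (r : ℝ) (hr : 0 < r)
    (hrp : r < ‖p‖) (α : ℝ) (hα : α = Real.arcsin (r / ‖p‖))
    (N₁ N₂ : EuclideanSpace ℝ (Fin 2))
    (hN₁ : N₁ = stdOrientation.rotation ((-(α + π / 2) : ℝ) : Real.Angle) p)
    (hN₂ : N₂ = stdOrientation.rotation ((α + π / 2 : ℝ) : Real.Angle) p)
    (v : EuclideanSpace ℝ (Fin 2)) (hv : v ≠ 0) :
    ((inner ℝ v N₁ : ℝ) ≤ 0 ∧ (inner ℝ v N₂ : ℝ) ≤ 0) ↔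
      InnerProductGeometry.angle v p ≤ α :=
  stmt11_general p r hr hrp α hα N₁ N₂ hN₁ hN₂ v hv

end
end

section
/- Work in the Euclidean plane E = EuclideanSpace ℝ (Fin 2) with its standard orientation o. Let p ∈ E be nonzero, 0 < α < π/2, and define the tangent directions T₁ = o.rotation (−α) p and T₂ = o.rotation α p. Then for every nonzero v ∈ E, the unoriented angle between v and p is at most α if and only if there exist c ≥ 0 and d ≥ 0 with v = c·T₁ + d·T₂. (The collision cone equals the conical hull of its two boundary directions T₁, T₂.) -/
/-!
Write `v = a • p + b • J p` in the orthogonal frame `(p, J p)`, `J` the right-angle rotation.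
Then `cos ∠(v, p) = a / √(a² + b²)`, so `∠(v, p) ≤ α` says `cos α · √(a² + b²) ≤ a`, which
squares to `|b| cos α ≤ a sin α`. On the other side
`c • T₁ + d • T₂ = (c + d) cos α • p + (d - c) sin α • J p`, and solving for `c, d ≥ 0` leads to
the same inequality.
-/

open Real

noncomputable section

open InnerProductGeometry Module

lemma exists_nonneg_add_mul_sub_mul_iff {a b k s : ℝ} (hk : 0 < k) (hs : 0 < s) :
    (∃ c : ℝ, 0 ≤ c ∧ ∃ d : ℝ, 0 ≤ d ∧ a = (c + d) * k ∧ b = (d - c) * s) ↔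
      |b| * k ≤ a * s := by
  constructor
  · rintro ⟨c, hc, d, hd, rfl, rfl⟩
    calc |(d - c) * s| * k = |d - c| * (s * k) := by rw [abs_mul, abs_of_pos hs]; ring
      _ ≤ (c + d) * (s * k) := by gcongr; exact abs_sub_le_iff.2 ⟨by linarith, by linarith⟩
      _ = (c + d) * k * s := by ring
  · intro h
    have hb : |b| / s ≤ a / k := by rw [div_le_div_iff₀ hs hk]; linarith
    refine ⟨(a / k - b / s) / 2, ?_, (a / k + b / s) / 2, ?_, ?_, ?_⟩
    · linarith [div_le_div_of_nonneg_right (le_abs_self b) hs.le]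
    · linarith [div_le_div_of_nonneg_right (neg_le_abs b) hs.le, neg_div s b]
    · field_simp; ring
    · field_simp; ring

lemma cos_mul_sqrt_sq_add_sq_le_iff {α : ℝ} (hα0 : 0 < α) (hα : α ≤ π / 2) (a b : ℝ) :
    cos α * √(a ^ 2 + b ^ 2) ≤ a ↔ |b| * cos α ≤ a * sin α := by
  have hcos : 0 ≤ cos α := cos_nonneg_of_neg_pi_div_two_le_of_le (by linarith) hα
  have hsin : 0 < sin α := sin_pos_of_pos_of_lt_pi hα0 (by linarith [pi_pos])
  have hsq : (cos α * √(a ^ 2 + b ^ 2)) ^ 2 ≤ a ^ 2 ↔ (|b| * cos α) ^ 2 ≤ (a * sin α) ^ 2 := by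
    rw [mul_pow, sq_sqrt (by positivity), mul_pow, mul_pow, sq_abs, sin_sq]
    constructor <;> intro h <;> nlinarith
  constructor
  · intro h
    have ha : 0 ≤ a := le_trans (by positivity) h
    exact (sq_le_sq₀ (by positivity) (by positivity)).1
      (hsq.1 (pow_le_pow_left₀ (by positivity) h 2))
  · intro h
    have ha : 0 ≤ a := nonneg_of_mul_nonneg_left (le_trans (by positivity) h) hsin
    exact (sq_le_sq₀ (by positivity) ha).1 (hsq.2 (pow_le_pow_left₀ (by positivity) h 2))

namespace Orientation

variable {E : Type*} [NormedAddCommGroup E] [InnerProductSpace ℝ E] [Fact (finrank ℝ E = 2)]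
  (o : Orientation ℝ E (Fin 2))

local notation "J" => o.rightAngleRotation

lemma exists_eq_smul_add_smul_rightAngleRotation {p : E} (hp : p ≠ 0) (v : E) :
    ∃ a b : ℝ, v = a • p + b • J p := by
  set B := o.basisRightAngleRotation p hp
  refine ⟨B.repr v 0, B.repr v 1, ?_⟩
  conv_lhs => rw [← B.sum_repr v]
  simp [B, Fin.sum_univ_two]

lemma smul_add_smul_rightAngleRotation_inj {p : E} (hp : p ≠ 0) {a b a' b' : ℝ} :
    a • p + b • J p = a' • p + b' • J p ↔ a = a' ∧ b = b' := by
  refine ⟨fun h ↦ ?_, by rintro ⟨rfl, rfl⟩; rfl⟩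
  have hli := (o.basisRightAngleRotation p hp).linearIndependent
  rw [coe_basisRightAngleRotation] at hli
  exact hli.eq_of_pair h

lemma smul_rotation_neg_add_smul_rotation (p : E) (α c d : ℝ) :
    c • o.rotation ((-α : ℝ) : Real.Angle) p + d • o.rotation (α : Real.Angle) p =
      ((c + d) * cos α) • p + ((d - c) * sin α) • J p := by
  simp only [rotation_apply, Real.Angle.cos_coe, Real.Angle.sin_coe, cos_neg, sin_neg]
  module

lemma inner_smul_add_smul_rightAngleRotation (p : E) (a b : ℝ) :
    inner ℝ (a • p + b • J p) p = a * ‖p‖ ^ 2 := by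
  simp [inner_add_left, real_inner_smul_left]

lemma norm_smul_add_smul_rightAngleRotation (p : E) (a b : ℝ) :
    ‖a • p + b • J p‖ = √(a ^ 2 + b ^ 2) * ‖p‖ := by
  have hsq : ‖a • p + b • J p‖ ^ 2 = (a ^ 2 + b ^ 2) * ‖p‖ ^ 2 := by
    rw [norm_add_sq_real, norm_smul, norm_smul, LinearIsometryEquiv.norm_map]
    simp [real_inner_smul_right, mul_pow]
    ring
  rw [← sqrt_sq (norm_nonneg (a • p + b • J p)), hsq, sqrt_mul (by positivity),
    sqrt_sq (norm_nonneg p)]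

lemma cos_angle_smul_add_smul_rightAngleRotation {p : E} (hp : p ≠ 0) (a b : ℝ) :
    cos (angle (a • p + b • J p) p) = a / √(a ^ 2 + b ^ 2) := by
  have : ‖p‖ ≠ 0 := norm_ne_zero_iff.2 hp
  rw [cos_angle, inner_smul_add_smul_rightAngleRotation, norm_smul_add_smul_rightAngleRotation]
  field_simp

lemma angle_smul_add_smul_rightAngleRotation_le_iff {p : E} (hp : p ≠ 0) {a b : ℝ}
    (hv : a • p + b • J p ≠ 0) {α : ℝ} (hα0 : 0 < α) (hα : α ≤ π / 2) :
    angle (a • p + b • J p) p ≤ α ↔ |b| * cos α ≤ a * sin α := by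
  have hr : 0 < √(a ^ 2 + b ^ 2) := by
    have hnorm := norm_pos_iff.2 hv
    rw [norm_smul_add_smul_rightAngleRotation] at hnorm
    exact pos_of_mul_pos_left hnorm (norm_nonneg p)
  rw [← strictAntiOn_cos.le_iff_ge ⟨hα0.le, by linarith [pi_pos]⟩
      ⟨angle_nonneg _ _, angle_le_pi _ _⟩,
    cos_angle_smul_add_smul_rightAngleRotation o hp, le_div_iff₀ hr,
    cos_mul_sqrt_sq_add_sq_le_iff hα0 hα]

lemma exists_eq_smul_rotation_neg_add_smul_rotation_iff {p : E} (hp : p ≠ 0) (a b : ℝ)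
    {α : ℝ} (hα0 : 0 < α) (hα : α < π / 2) :
    (∃ c : ℝ, 0 ≤ c ∧ ∃ d : ℝ, 0 ≤ d ∧
        a • p + b • J p =
          c • o.rotation ((-α : ℝ) : Real.Angle) p + d • o.rotation (α : Real.Angle) p) ↔
      |b| * cos α ≤ a * sin α := by
  simp only [smul_rotation_neg_add_smul_rotation, smul_add_smul_rightAngleRotation_inj o hp]
  exact exists_nonneg_add_mul_sub_mul_iff (cos_pos_of_mem_Ioo ⟨by linarith, hα⟩)
    (sin_pos_of_pos_of_lt_pi hα0 (by linarith [pi_pos]))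

end Orientation

/-- The collision cone with axis `p` and half-opening angle `α ∈ (0, π/2)` equals the conical
hull of its two boundary directions `T₁ = rotation (-α) p` and `T₂ = rotation α p`: a nonzero `v`
makes unoriented angle at most `α` with `p` iff `v = c • T₁ + d • T₂` with `c, d ≥ 0`. -/
theorem stmt12 (p : EuclideanSpace ℝ (Fin 2)) (hp : p ≠ 0) (α : ℝ)
    (hα0 : 0 < α) (hα : α < π / 2)
    (T₁ T₂ : EuclideanSpace ℝ (Fin 2))
    (hT₁ : T₁ = stdOrientation.rotation ((-α : ℝ) : Real.Angle) p)
    (hT₂ : T₂ = stdOrientation.rotation ((α : ℝ) : Real.Angle) p)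
    (v : EuclideanSpace ℝ (Fin 2)) (hv : v ≠ 0) :
    InnerProductGeometry.angle v p ≤ α ↔
      ∃ c : ℝ, 0 ≤ c ∧ ∃ d : ℝ, 0 ≤ d ∧ v = c • T₁ + d • T₂ := by
  obtain ⟨a, b, rfl⟩ := stdOrientation.exists_eq_smul_add_smul_rightAngleRotation hp v
  rw [hT₁, hT₂, stdOrientation.angle_smul_add_smul_rightAngleRotation_le_iff hp hv hα0 hα.le,
    stdOrientation.exists_eq_smul_rotation_neg_add_smul_rotation_iff hp a b hα0 hα]
end
end
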